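/- Let J be an invertible real 2×2 matrix and define W_± := { N ∈ M₂(ℝ) : ‖N J^{−1}‖² ± 2·det(N J^{−1}) = 0 }. Then W_+ and W_− are linear subspaces of M₂(ℝ), each of dimension 2, and M₂(ℝ) = W_+ ⊕ W_− (i.e. W_+ ∩ W_− = {0} and W_+ + W_− = M₂(ℝ)). -/

import Mathlib

open Matrix

/-- The square of the Frobenius norm: `‖A‖² = tr(A Aᵀ)`. -/
noncomputable def frobSq (A : Matrix (Fin 2) (Fin 2) ℝ) : ℝ := (A * Aᵀ).trace

/-!
For `M = !![a, b; c, d]` one has `‖M‖² + 2 det M = (a + d)² + (b - c)²` and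
`‖M‖² - 2 det M = (a - d)² + (b + c)²`. So with `M = N J⁻¹`, `W₊` and `W₋` are the preimages under
the linear automorphism `N ↦ N J⁻¹` of the anticonformal matrices `!![a, b; b, -a]` and the
conformal matrices `!![a, b; -b, a]`, two complementary planes in `M₂(ℝ)`.
-/

section

variable (R : Type*) [CommRing R]

def conformalSubmodule : Submodule R (Matrix (Fin 2) (Fin 2) R) :=
  Submodule.span R {1, !![0, 1; -1, 0]}

def anticonformalSubmodule : Submodule R (Matrix (Fin 2) (Fin 2) R) :=
  Submodule.span R {!![1, 0; 0, -1], !![0, 1; 1, 0]}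

variable {R}

theorem mem_conformalSubmodule_iff {M : Matrix (Fin 2) (Fin 2) R} :
    M ∈ conformalSubmodule R ↔ M 0 0 = M 1 1 ∧ M 0 1 = -M 1 0 := by
  rw [conformalSubmodule, Submodule.mem_span_pair]
  constructor
  · rintro ⟨a, b, rfl⟩
    simp
  · rintro ⟨h₀, h₁⟩
    refine ⟨M 0 0, M 0 1, ?_⟩
    ext i j
    fin_cases i <;> fin_cases j <;> simp [h₀, h₁]

theorem mem_anticonformalSubmodule_iff {M : Matrix (Fin 2) (Fin 2) R} :
    M ∈ anticonformalSubmodule R ↔ M 0 0 + M 1 1 = 0 ∧ M 0 1 = M 1 0 := by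
  rw [anticonformalSubmodule, Submodule.mem_span_pair]
  constructor
  · rintro ⟨a, b, rfl⟩
    simp
  · rintro ⟨h₀, h₁⟩
    refine ⟨M 0 0, M 0 1, ?_⟩
    ext i j
    fin_cases i <;> fin_cases j <;> simp [h₁, eq_neg_of_add_eq_zero_right h₀]

theorem finrank_conformalSubmodule [Nontrivial R] :
    Module.finrank R (conformalSubmodule R) = 2 := by
  rw [conformalSubmodule, ← range_cons_cons_empty, finrank_span_eq_card, Fintype.card_fin]
  rw [LinearIndependent.pair_iff]
  intro s t h
  simpa using And.intro (congrFun₂ h 0 0) (congrFun₂ h 0 1)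

theorem finrank_anticonformalSubmodule [Nontrivial R] :
    Module.finrank R (anticonformalSubmodule R) = 2 := by
  rw [anticonformalSubmodule, ← range_cons_cons_empty, finrank_span_eq_card, Fintype.card_fin]
  rw [LinearIndependent.pair_iff]
  intro s t h
  simpa using And.intro (congrFun₂ h 0 0) (congrFun₂ h 0 1)

end

section

variable {K : Type*} [Field K] [NeZero (2 : K)]

theorem isCompl_anticonformalSubmodule_conformalSubmodule :
    IsCompl (anticonformalSubmodule K) (conformalSubmodule K) := by
  refine ⟨Submodule.disjoint_def.mpr fun M hA hC ↦ ?_,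
    Submodule.codisjoint_iff_exists_add_eq.mpr fun M ↦ ?_⟩
  · obtain ⟨hA₀, hA₁⟩ := mem_anticonformalSubmodule_iff.mp hA
    obtain ⟨hC₀, hC₁⟩ := mem_conformalSubmodule_iff.mp hC
    have h₀ : 2 * M 1 1 = 0 := by linear_combination hA₀ - hC₀
    have h₁ : 2 * M 1 0 = 0 := by linear_combination hC₁ - hA₁
    simp only [mul_eq_zero, two_ne_zero, false_or] at h₀ h₁
    ext i j
    fin_cases i <;> fin_cases j <;> simp [hC₀, hC₁, h₀, h₁]
  · set a := M 0 0; set b := M 0 1; set c := M 1 0; set d := M 1 1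
    refine ⟨!![(a - d) / 2, (b + c) / 2; (b + c) / 2, (d - a) / 2],
      !![(a + d) / 2, (b - c) / 2; (c - b) / 2, (a + d) / 2],
      mem_anticonformalSubmodule_iff.mpr ⟨?_, rfl⟩, mem_conformalSubmodule_iff.mpr ⟨rfl, ?_⟩, ?_⟩
    · change (a - d) / 2 + (d - a) / 2 = 0
      ring
    · change (b - c) / 2 = -((c - b) / 2)
      ring
    · ext i j
      fin_cases i <;> fin_cases j <;>
        simp only [Fin.zero_eta, Fin.mk_one, Fin.isValue, Matrix.add_apply, of_apply, cons_val',
          cons_val_zero, cons_val_one] <;>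
        field_simp <;> ring

end

theorem frobSq_add_two_mul_det (M : Matrix (Fin 2) (Fin 2) ℝ) :
    frobSq M + 2 * M.det = (M 0 0 + M 1 1) ^ 2 + (M 0 1 - M 1 0) ^ 2 := by
  simp only [frobSq, trace_fin_two, det_fin_two, mul_apply, transpose_apply, Fin.sum_univ_two]
  ring

theorem frobSq_sub_two_mul_det (M : Matrix (Fin 2) (Fin 2) ℝ) :
    frobSq M - 2 * M.det = (M 0 0 - M 1 1) ^ 2 + (M 0 1 + M 1 0) ^ 2 := by
  simp only [frobSq, trace_fin_two, det_fin_two, mul_apply, transpose_apply, Fin.sum_univ_two]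
  ring

theorem frobSq_add_two_mul_det_eq_zero_iff {M : Matrix (Fin 2) (Fin 2) ℝ} :
    frobSq M + 2 * M.det = 0 ↔ M ∈ anticonformalSubmodule ℝ := by
  rw [frobSq_add_two_mul_det, add_eq_zero_iff_of_nonneg (sq_nonneg _) (sq_nonneg _),
    mem_anticonformalSubmodule_iff, sq_eq_zero_iff, sq_eq_zero_iff, sub_eq_zero]

theorem frobSq_sub_two_mul_det_eq_zero_iff {M : Matrix (Fin 2) (Fin 2) ℝ} :
    frobSq M - 2 * M.det = 0 ↔ M ∈ conformalSubmodule ℝ := by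
  rw [frobSq_sub_two_mul_det, add_eq_zero_iff_of_nonneg (sq_nonneg _) (sq_nonneg _),
    mem_conformalSubmodule_iff, sq_eq_zero_iff, sq_eq_zero_iff, sub_eq_zero, add_eq_zero_iff_eq_neg]

theorem null_spaces_direct_sum
    (J : Matrix (Fin 2) (Fin 2) ℝ) (hJ : IsUnit J.det) :
    ∃ Wp Wm : Submodule ℝ (Matrix (Fin 2) (Fin 2) ℝ),
      (Wp : Set (Matrix (Fin 2) (Fin 2) ℝ))
          = {N | frobSq (N * J⁻¹) + 2 * (N * J⁻¹).det = 0} ∧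
      (Wm : Set (Matrix (Fin 2) (Fin 2) ℝ))
          = {N | frobSq (N * J⁻¹) - 2 * (N * J⁻¹).det = 0} ∧
      Module.finrank ℝ Wp = 2 ∧ Module.finrank ℝ Wm = 2 ∧
      Wp ⊓ Wm = ⊥ ∧ Wp ⊔ Wm = ⊤ := by
  let e := (nonsingInvUnit J hJ).mulRightLinearEquiv ℝ
  let φ := Submodule.orderIsoMapComap e
  have hcompl := φ.isCompl_iff.mp isCompl_anticonformalSubmodule_conformalSubmodule
  refine ⟨φ (anticonformalSubmodule ℝ), φ (conformalSubmodule ℝ), ?_, ?_, ?_, ?_,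
    hcompl.inf_eq_bot, hcompl.sup_eq_top⟩
  · ext N
    exact (Submodule.mem_map_equiv _).trans frobSq_add_two_mul_det_eq_zero_iff.symm
  · ext N
    exact (Submodule.mem_map_equiv _).trans frobSq_sub_two_mul_det_eq_zero_iff.symm
  · exact (LinearEquiv.finrank_map_eq e _).trans finrank_anticonformalSubmodule
  · exact (LinearEquiv.finrank_map_eq e _).trans finrank_conformalSubmodule
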